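/- arXiv:1403.0788 — 4 statements merged into one kernel-verified Lean document; each statement's English description precedes it below -/
import Mathlib

section
/- In the field of rational functions $\mathbb{Q}(y_1,\ldots,y_n,t)$, the symmetrization identity $\sum_{w \in S_n} w\bigl(\prod_{i<j} \frac{y_i - t y_j}{y_i - y_j}\bigr) = v_n(t)$ holds, where $v_n(t) = \prod_{i=1}^{n} \frac{1-t^i}{1-t}$ and $w$ acts by permuting the variables $y_1,\ldots,y_n$. -/
/-!
Split a permutation `w` of `Fin (n + 1)` according to `k = w 0`: the factors with `i = 0` give
`∏_{j ≠ k} (y_k - t y_j) / (y_k - y_j)` and the remaining ones are the same sum in the other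
`n` variables. So by induction it suffices that `∑_k ∏_{j ≠ k} (y_k - t y_j) / (y_k - y_j)` is
`1 + t + ⋯ + t^n`. This follows by Lagrange interpolation at `0`, on the nodes `y_j`, of
`∏_j (X - t y_j) - ∏_j (X - y_j)`, whose degree is at most `n`: its value
`(t^(n+1) - 1) ∏_j (-y_j)` at `0` equals `(t - 1) ∏_j (-y_j)` times the sum.
-/

open Finset Polynomial Equiv

namespace Lagrange

variable {K ι : Type*} [Field K] [DecidableEq ι] {s : Finset ι} {v : ι → K}

theorem eval_eq_sum_mul_prod_div {p : K[X]} (hvs : Set.InjOn v s) (hp : p.degree < #s) (x : K) :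
    p.eval x = ∑ i ∈ s, p.eval (v i) * ∏ j ∈ s.erase i, (x - v j) / (v i - v j) := by
  conv_lhs => rw [eq_interpolate hvs hp]
  simp only [interpolate_apply, Lagrange.basis, basisDivisor, eval_finsetSum, eval_mul, eval_C,
    eval_prod, eval_sub, eval_X, div_eq_inv_mul]

end Lagrange

variable {K ι : Type*} [Field K]

theorem sum_prod_erase_sub_mul_div_sub_eq_geom_sum [DecidableEq ι] {s : Finset ι} {y : ι → K}
    (hy : Set.InjOn y s) (hy0 : ∀ i ∈ s, y i ≠ 0) (t : K) :
    ∑ k ∈ s, ∏ j ∈ s.erase k, (y k - t * y j) / (y k - y j) =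
      ∑ j ∈ range #s, t ^ j := by
  obtain rfl | ht := eq_or_ne t 1
  · have hsub : ∀ k ∈ s, ∀ j ∈ s.erase k, y k - y j ≠ 0 := fun k hk j hj =>
      sub_ne_zero.2 fun h => (ne_of_mem_erase hj) (hy (mem_of_mem_erase hj) hk h.symm)
    simp +contextual [div_self, hsub]
  set Q := ∏ j ∈ s, -y j
  have hQ : Q ≠ 0 := prod_ne_zero_iff.2 fun j hj => neg_ne_zero.2 (hy0 j hj)
  set p : K[X] := Lagrange.nodal s (t • y) - Lagrange.nodal s y
  have hp : p.degree < #s := by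
    refine (degree_sub_lt_left ?_ Lagrange.nodal_ne_zero ?_).trans_eq Lagrange.degree_nodal
    · rw [Lagrange.degree_nodal, Lagrange.degree_nodal]
    · rw [Lagrange.nodal_monic.leadingCoeff, Lagrange.nodal_monic.leadingCoeff]
  have heval_zero : p.eval 0 = (t ^ #s - 1) * Q := by
    simp [p, Lagrange.eval_nodal, sub_mul, Q, ← prod_const, ← prod_mul_distrib]
  have heval_node : ∀ k ∈ s, p.eval (y k) * ∏ j ∈ s.erase k, (0 - y j) / (y k - y j) =
      (t - 1) * Q * ∏ j ∈ s.erase k, (y k - t * y j) / (y k - y j) := by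
    intro k hk
    have hQk : Q = -y k * ∏ j ∈ s.erase k, -y j := (mul_prod_erase s _ hk).symm
    have hfactors :
        (∏ j ∈ s.erase k, (y k - t * y j)) * ∏ j ∈ s.erase k, (0 - y j) / (y k - y j) =
          (∏ j ∈ s.erase k, -y j) * ∏ j ∈ s.erase k, (y k - t * y j) / (y k - y j) := by
      simp only [← prod_mul_distrib]
      exact prod_congr rfl fun j _ => by ring
    rw [eval_sub, Lagrange.eval_nodal_at_node hk, sub_zero, Lagrange.eval_nodal,
      ← mul_prod_erase s _ hk, hQk]
    simp only [Pi.smul_apply, smul_eq_mul] at hfactors ⊢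
    linear_combination (y k - t * y k) * hfactors
  have hinterp := Lagrange.eval_eq_sum_mul_prod_div hy hp 0
  rw [heval_zero, sum_congr rfl heval_node, ← mul_sum, ← geom_sum_mul] at hinterp
  exact mul_left_cancel₀ (mul_ne_zero (sub_ne_zero.2 ht) hQ) (by linear_combination -hinterp)

theorem Fin.prod_prod_Ioi_succ {M : Type*} [CommMonoid M] {n : ℕ}
    (f : Fin (n + 1) → Fin (n + 1) → M) :
    ∏ i, ∏ j ∈ Ioi i, f i j =
      (∏ j : Fin n, f 0 j.succ) * ∏ i : Fin n, ∏ j ∈ Ioi i, f i.succ j.succ := by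
  simp only [Fin.prod_univ_succ, Fin.prod_Ioi_zero, Fin.prod_Ioi_succ]

theorem Fin.prod_swap_zero_succ {M : Type*} [CommMonoid M] {n : ℕ} (p : Fin (n + 1))
    (g : Fin (n + 1) → M) :
    ∏ j : Fin n, g (swap 0 p j.succ) = ∏ j ∈ univ.erase p, g j := by
  rw [← Fin.prod_Ioi_zero fun i => g (swap 0 p i)]
  refine prod_equiv (swap 0 p) (fun i => ?_) fun _ _ => rfl
  simp [swap_apply_eq_iff]

theorem sum_perm_prod_Ioi_sub_mul_div_sub_eq_prod_geom_sum {n : ℕ} {y : Fin n → K}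
    (hy : Function.Injective y) (hy0 : ∀ i, y i ≠ 0) (t : K) :
    ∑ w : Perm (Fin n), ∏ i, ∏ j ∈ Ioi i, (y (w i) - t * y (w j)) / (y (w i) - y (w j)) =
      ∏ i ∈ range n, ∑ j ∈ range (i + 1), t ^ j := by
  induction n with
  | zero => simp
  | succ n ih =>
    rw [← Perm.decomposeFin.symm.sum_comp, Fintype.sum_prod_type, prod_range_succ, mul_comm]
    simp only [Fin.prod_prod_Ioi_succ, Perm.decomposeFin_symm_apply_zero,
      Perm.decomposeFin_symm_apply_succ]
    have hrest (p : Fin (n + 1)) := ih (y := fun i => y (swap 0 p i.succ))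
      (hy.comp ((swap 0 p).injective.comp (Fin.succ_injective n))) fun i => hy0 _
    have hfirst (p : Fin (n + 1)) (e : Perm (Fin n)) :
        ∏ j, (y p - t * y (swap 0 p (e j).succ)) / (y p - y (swap 0 p (e j).succ)) =
          ∏ j ∈ univ.erase p, (y p - t * y j) / (y p - y j) :=
      (Equiv.prod_comp e fun j =>
          (y p - t * y (swap 0 p j.succ)) / (y p - y (swap 0 p j.succ))).trans
        (Fin.prod_swap_zero_succ p fun j => (y p - t * y j) / (y p - y j))
    simp only [hfirst, ← mul_sum, hrest, ← sum_mul]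
    rw [sum_prod_erase_sub_mul_div_sub_eq_geom_sum hy.injOn (fun i _ => hy0 i), card_univ,
      Fintype.card_fin]

/-- In the field of rational functions `ℚ(y₁, …, yₙ, t)`, the symmetrization identity
`∑_{w ∈ Sₙ} w(∏_{i<j} (yᵢ - t yⱼ)/(yᵢ - yⱼ)) = vₙ(t)` holds, where
`vₙ(t) = ∏_{i=1}^n (1 + t + ⋯ + t^{i-1})` and `w` acts by permuting the `y`-variables. -/
theorem hall_littlewood_symmetrization (n : ℕ) :
    let F := FractionRing (MvPolynomial (Option (Fin n)) ℚ)
    let y : Fin n → F := fun i => algebraMap (MvPolynomial (Option (Fin n)) ℚ) F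
      (MvPolynomial.X (some i))
    let t : F := algebraMap (MvPolynomial (Option (Fin n)) ℚ) F (MvPolynomial.X none)
    ∑ w : Equiv.Perm (Fin n), ∏ i, ∏ j ∈ Ioi i,
        ((y (w i) - t * y (w j)) / (y (w i) - y (w j)))
      = ∏ i ∈ range n, ∑ j ∈ range (i + 1), t ^ j := by
  intro F y t
  have hinj : Function.Injective (algebraMap (MvPolynomial (Option (Fin n)) ℚ) F) :=
    IsFractionRing.injective _ _
  exact sum_perm_prod_Ioi_sub_mul_div_sub_eq_prod_geom_sum
    (hinj.comp (MvPolynomial.X_injective.comp (Option.some_injective _)))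
    (fun i => (map_ne_zero_iff _ hinj).2 (MvPolynomial.X_ne_zero _)) t
end

section
/- For $n=3$: in $\mathbb{Q}(y_1,y_2,y_3,t)$, summing over all six permutations $w \in S_3$ of the variables, $\sum_{w \in S_3} w\Bigl(\frac{(y_1-ty_2)(y_1-ty_3)(y_2-ty_3)}{(y_1-y_2)(y_1-y_3)(y_2-y_3)}\Bigr) = (1+t)(1+t+t^2)$. -/
/-! Clearing the Vandermonde denominator `(y₁ - y₂)(y₁ - y₃)(y₂ - y₃)`, the permuted term
for `w` becomes `sign w · w(∏_{i<j} (yᵢ - t yⱼ))`, and the antisymmetrization of this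
polynomial is `(1 + t)(1 + t + t²)` times the Vandermonde polynomial. -/

open Finset Equiv

theorem Fin.sum_univ_perm_three {M : Type*} [AddCommMonoid M] (f : Perm (Fin 3) → M) :
    ∑ w, f w = f 1 + f (swap 0 1) + f (swap 0 2) + f (swap 1 2)
      + f (swap 0 1 * swap 1 2) + f (swap 1 2 * swap 0 1) := by
  have huniv : (univ : Finset (Perm (Fin 3))) =
      {1, swap 0 1, swap 0 2, swap 1 2, swap 0 1 * swap 1 2, swap 1 2 * swap 0 1} := by
    decide
  rw [huniv, sum_insert (by decide), sum_insert (by decide), sum_insert (by decide),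
    sum_insert (by decide), sum_insert (by decide), sum_singleton]
  abel

theorem Fin.prod_univ_prod_Ioi_three {M : Type*} [CommMonoid M] (f : Fin 3 → Fin 3 → M) :
    ∏ i, ∏ j ∈ Ioi i, f i j = f 0 1 * f 0 2 * f 1 2 := by
  rw [Fin.prod_univ_three, show Ioi (0 : Fin 3) = {1, 2} from rfl,
    show Ioi (1 : Fin 3) = {2} from rfl, show Ioi (2 : Fin 3) = ∅ from rfl,
    prod_pair (by decide), prod_singleton, prod_empty, mul_one, mul_assoc]

theorem sum_orderings_prod_div_sub_three {K : Type*} [Field K] {a b c : K}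
    (hab : a ≠ b) (hac : a ≠ c) (hbc : b ≠ c) (t : K) :
    let g : K → K → K := fun u v => (u - t * v) / (u - v)
    g a b * g a c * g b c + g b a * g b c * g a c + g c b * g c a * g b a
      + g a c * g a b * g c b + g b c * g b a * g c a + g c a * g c b * g a b
      = (1 + t) * (1 + t + t ^ 2) := by
  intro g
  have hab' := sub_ne_zero.2 hab
  have hac' := sub_ne_zero.2 hac
  have hbc' := sub_ne_zero.2 hbc
  have hba' := sub_ne_zero.2 hab.symm
  have hca' := sub_ne_zero.2 hac.symm
  have hcb' := sub_ne_zero.2 hbc.symm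
  simp only [g]
  field_simp
  ring

/-- For pairwise distinct indeterminates `y₁, y₂, y₃` (elements of a field) and `t`:
summing over all six permutations of the variables,
`∑_{w ∈ S₃} w((y₁-ty₂)(y₁-ty₃)(y₂-ty₃)/((y₁-y₂)(y₁-y₃)(y₂-y₃))) = (1+t)(1+t+t²)`. -/
theorem hall_littlewood_sym_three {K : Type*} [Field K] (y : Fin 3 → K)
    (hy : Function.Injective y) (t : K) :
    ∑ w : Equiv.Perm (Fin 3), ∏ i, ∏ j ∈ Ioi i,
        ((y (w i) - t * y (w j)) / (y (w i) - y (w j)))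
      = (1 + t) * (1 + t + t ^ 2) := by
  simp only [Fin.sum_univ_perm_three, Fin.prod_univ_prod_Ioi_three, Perm.one_apply,
    Perm.mul_apply, swap_apply_left, swap_apply_right, swap_apply_of_ne_of_ne, ne_eq,
    Fin.reduceEq, not_false_eq_true]
  exact sum_orderings_prod_div_sub_three (hy.ne (by decide)) (hy.ne (by decide))
    (hy.ne (by decide)) t
end

section
/- Let $\lambda = (\lambda_1,\ldots,\lambda_n)$ be a sequence of nonnegative integers and define $R_\lambda(y_1,\ldots,y_n;t) = \sum_{w\in S_n} w\bigl(y_1^{\lambda_1}\cdots y_n^{\lambda_n} \prod_{i<j}\frac{y_i - ty_j}{y_i-y_j}\bigr)$. Then $R_\lambda$ is a polynomial in $y_1,\ldots,y_n,t$ (i.e., the apparent denominators cancel). -/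
/-!
Multiplying `R_λ` by the Vandermonde product `Δ = ∏_{i<j} (yᵢ - yⱼ)` and using `w(Δ) = sgn(w) Δ`
gives `Δ R_λ = ∑_w sgn(w) w(P)` with `P = y^λ ∏_{i<j} (yᵢ - t yⱼ)` a polynomial. This
antisymmetrization changes sign under every transposition `(a b)`, so it vanishes after
substituting `y_a := y_b` and is divisible by `y_a - y_b`. These linear forms are pairwise
non-associated primes, hence `Δ` itself divides it and the quotient is `R_λ`.
-/

open Finset MvPolynomial Equiv

namespace MvPolynomial

variable {R σ : Type*} [DecidableEq σ]

theorem X_sub_X_dvd_sub_rename_update [CommRing R] (a b : σ) (f : MvPolynomial σ R) :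
    X a - X b ∣ f - rename (Function.update id a b) f := by
  induction f using MvPolynomial.induction_on with
  | C r => simp
  | add f g hf hg => simpa only [map_add, add_sub_add_comm] using dvd_add hf hg
  | mul_X f i hf =>
    have hi : (X a - X b : MvPolynomial σ R) ∣ X i - X (Function.update id a b i) := by
      rcases eq_or_ne i a with rfl | hia
      · simp
      · simp [hia]
    rw [map_mul, rename_X]
    convert dvd_add (hf.mul_right (X i)) (hi.mul_left (rename (Function.update id a b) f)) using 1
    ring

theorem X_sub_X_dvd_of_rename_swap_eq_neg [CommRing R] [IsDomain R] [CharZero R] {a b : σ}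
    {f : MvPolynomial σ R} (hf : rename (swap a b) f = -f) : X a - X b ∣ f := by
  have hupdate : Function.update id a b ∘ swap a b = Function.update id a b := by
    ext i
    simp only [Function.comp_apply, Function.update_apply, swap_apply_def, id]
    split_ifs <;> simp_all
  have hzero : rename (Function.update id a b) f = 0 := by
    rw [← CharZero.eq_neg_self_iff, ← map_neg, ← hf, rename_rename, hupdate]
  simpa [hzero] using X_sub_X_dvd_sub_rename_update a b f

theorem prime_X_sub_X [CommRing R] [IsDomain R] {a b : σ} (h : a ≠ b) :
    Prime (X a - X b : MvPolynomial σ R) := by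
  let e := (renameEquiv R (optionSubtypeNe a).symm).trans (optionEquivLeft R {c // c ≠ a})
  have he : e (X a - X b) = Polynomial.X - Polynomial.C (X ⟨b, h.symm⟩) := by
    simp [e, optionSubtypeNe_symm_of_ne h.symm]
  rw [← MulEquiv.prime_iff e, he]
  exact Polynomial.prime_X_sub_C _

theorem sym2_eq_of_X_sub_X_dvd [CommRing R] [Nontrivial R] {a b c d : σ} (hab : a ≠ b)
    (hcd : c ≠ d) (h : (X a - X b : MvPolynomial σ R) ∣ X c - X d) : s(a, b) = s(c, d) := by
  have hkill := map_dvd (rename (R := R) (Function.update id a b)) h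
  simp only [map_sub, rename_X, Function.update_self, Function.update_of_ne hab.symm, id,
    sub_self, zero_dvd_iff, sub_eq_zero] at hkill
  have := X_injective hkill
  simp only [Function.update_apply, id] at this
  split_ifs at this <;> grind

variable {ι : Type*} [Fintype ι] [DecidableEq ι]

/-- `Sₙ` permutes the variables `some i` (the `yᵢ`) and fixes `none` (the variable `t`). -/
noncomputable def antisymmetrization [CommRing R] (f : MvPolynomial (Option ι) R) :
    MvPolynomial (Option ι) R :=
  ∑ w : Perm ι, Perm.sign w • rename (optionCongr w) f

theorem rename_swap_antisymmetrization [CommRing R] {a b : ι} (hab : a ≠ b)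
    (f : MvPolynomial (Option ι) R) :
    rename (swap (some a) (some b)) (antisymmetrization f) = -antisymmetrization f := by
  rw [← optionCongr_swap, antisymmetrization, map_sum, ← sum_neg_distrib]
  refine Fintype.sum_equiv (Equiv.mulLeft (swap a b)) _ _ fun w => ?_
  rw [map_zsmul_unit, rename_rename, ← coe_trans, ← optionCongr_trans, ← Perm.mul_def,
    coe_mulLeft, Perm.sign_mul, Perm.sign_swap hab, neg_mul, one_mul, Units.neg_smul, neg_neg]

theorem vandermonde_dvd_antisymmetrization {K : Type*} [Field K] [CharZero K] {n : ℕ}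
    (f : MvPolynomial (Option (Fin n)) K) :
    (∏ i, ∏ j ∈ Ioi i, (X (some i) - X (some j))) ∣ antisymmetrization f := by
  rw [← prod_sigma univ Ioi fun p => X (some p.1) - X (some p.2)]
  refine prod_dvd_of_isRelPrime (fun p hp q hq hpq => ?_) fun p hp => ?_
  · have hp' := mem_Ioi.mp (mem_sigma.mp hp).2
    have hq' := mem_Ioi.mp (mem_sigma.mp hq).2
    refine ((prime_X_sub_X (by simpa using hp'.ne)).irreducible.isRelPrime_iff_not_dvd).mpr
      fun h => hpq ?_
    have := sym2_eq_of_X_sub_X_dvd (by simpa using hp'.ne) (by simpa using hq'.ne) h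
    grind
  · exact X_sub_X_dvd_of_rename_swap_eq_neg
      (rename_swap_antisymmetrization (mem_Ioi.mp (mem_sigma.mp hp).2).ne f)

end MvPolynomial

section Vandermonde

variable {n : ℕ}

theorem prod_Ioi_sub_comp_perm {R : Type*} [CommRing R] (v : Fin n → R) (w : Perm (Fin n)) :
    ∏ i, ∏ j ∈ Ioi i, (v (w i) - v (w j)) =
      (Perm.sign w : ℤ) * ∏ i, ∏ j ∈ Ioi i, (v i - v j) := by
  have h := Matrix.det_permute w (Matrix.vandermonde (-v))
  have hsub : (Matrix.vandermonde (-v)).submatrix w id = Matrix.vandermonde (-v ∘ w) := by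
    ext i j; simp [Matrix.vandermonde_apply]
  simpa only [hsub, Matrix.det_vandermonde, Function.comp_apply, Pi.neg_apply, neg_sub_neg]
    using h

theorem prod_Ioi_sub_ne_zero {R : Type*} [CommRing R] [IsDomain R] {v : Fin n → R}
    (hv : Function.Injective v) : ∏ i, ∏ j ∈ Ioi i, (v i - v j) ≠ 0 :=
  prod_ne_zero_iff.mpr fun _ _ => prod_ne_zero_iff.mpr fun _ hj =>
    sub_ne_zero.mpr (hv.ne (mem_Ioi.mp hj).ne)

theorem prod_div_sub_comp_perm_mul_prod_sub {K : Type*} [Field K] {v : Fin n → K}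
    (hv : Function.Injective v) (c : Fin n → Fin n → K) (w : Perm (Fin n)) :
    (∏ i, ∏ j ∈ Ioi i, c i j / (v (w i) - v (w j))) * ∏ i, ∏ j ∈ Ioi i, (v i - v j) =
      (Perm.sign w : ℤ) * ∏ i, ∏ j ∈ Ioi i, c i j := by
  have hsign : ((Perm.sign w : ℤ) : K) * (Perm.sign w : ℤ) = 1 := by
    rw [← Int.cast_mul, ← Units.val_mul, Int.units_mul_self, Units.val_one, Int.cast_one]
  simp only [prod_div_distrib]
  rw [prod_Ioi_sub_comp_perm]
  field_simp [prod_Ioi_sub_ne_zero hv, left_ne_zero_of_mul_eq_one hsign]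
  linear_combination -(∏ i, ∏ j ∈ Ioi i, c i j) * hsign

end Vandermonde

/-- For a sequence `λ = (λ₁,…,λₙ)` of nonnegative integers, the symmetrized expression
`R_λ(y₁,…,yₙ;t) = ∑_{w∈Sₙ} w(y₁^{λ₁}⋯yₙ^{λₙ} ∏_{i<j} (yᵢ-tyⱼ)/(yᵢ-yⱼ))` is a polynomial
in `y₁,…,yₙ,t` (the apparent denominators cancel). -/
theorem R_lambda_is_polynomial (n : ℕ) (lam : Fin n → ℕ) :
    let F := FractionRing (MvPolynomial (Option (Fin n)) ℚ)
    let y : Fin n → F := fun i => algebraMap (MvPolynomial (Option (Fin n)) ℚ) F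
      (MvPolynomial.X (some i))
    let t : F := algebraMap (MvPolynomial (Option (Fin n)) ℚ) F (MvPolynomial.X none)
    ∃ p : MvPolynomial (Option (Fin n)) ℚ,
      algebraMap (MvPolynomial (Option (Fin n)) ℚ) F p =
        ∑ w : Equiv.Perm (Fin n), (∏ i, y (w i) ^ lam i) *
          ∏ i, ∏ j ∈ Ioi i, ((y (w i) - t * y (w j)) / (y (w i) - y (w j))) := by
  intro F y t
  have hy : Function.Injective y :=
    (IsFractionRing.injective _ F).comp (X_injective.comp (Option.some_injective _))
  obtain ⟨p, hp⟩ := vandermonde_dvd_antisymmetrization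
    ((∏ i, X (some i) ^ lam i) * ∏ i, ∏ j ∈ Ioi i, (X (some i) - X none * X (some j)) :
      MvPolynomial (Option (Fin n)) ℚ)
  have hΔ : algebraMap (MvPolynomial (Option (Fin n)) ℚ) F
      (∏ i, ∏ j ∈ Ioi i, (X (some i) - X (some j))) = ∏ i, ∏ j ∈ Ioi i, (y i - y j) := by
    simp [map_prod, y]
  refine ⟨p, mul_left_cancel₀ (prod_Ioi_sub_ne_zero hy) ?_⟩
  rw [← hΔ, ← map_mul, ← hp, antisymmetrization, map_sum, mul_sum]
  refine sum_congr rfl fun w _ => ?_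
  rw [hΔ, mul_left_comm, mul_comm (∏ i, ∏ j ∈ Ioi i, (y i - y j)),
    prod_div_sub_comp_perm_mul_prod_sub hy]
  simp only [map_mul, map_prod, map_pow, map_sub, map_intCast, rename_X, optionCongr_apply,
    Option.map_some, Option.map_none, Units.smul_def, zsmul_eq_mul, y, t]
  ring
end

section
/- Hall-Littlewood polynomials in $n$ variables are stable under juxtaposition in the following sense: for sequences $\lambda = (\lambda_1,\ldots,\lambda_q)$ and $\mu = (\mu_1,\ldots,\mu_r)$ of nonnegative integers with $n = q + r$, one has $\sum_{w \in S_n/(S_q\times S_r)} w\Bigl(\frac{R_\lambda(y_1,\ldots,y_q;t) R_\mu(y_{q+1},\ldots,y_n;t)\prod_{i\le q<j}(y_i-ty_j)}{\prod_{i\le q<j}(y_i-y_j)}\Bigr) = R_{\lambda\mu}(y_1,\ldots,y_n;t)$, where $S_n$ acts on the variables and the sum runs over coset representatives of $S_q \times S_r$ in $S_n$. -/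
open Finset Equiv

namespace RJux

lemma Ioi_filter {m : ℕ} (i : Fin m) : Ioi i = univ.filter (fun j => i < j) := by
  ext j; simp

lemma prod_Ioi_ite {M : Type*} [CommMonoid M] {m : ℕ} (i : Fin m) (g : Fin m → M) :
    ∏ b ∈ Ioi i, g b = ∏ b, if i < b then g b else 1 := by
  rw [Ioi_filter, prod_filter]

lemma cc_lt (q r : ℕ) (a b : Fin q) : Fin.castAdd r a < Fin.castAdd r b ↔ a < b := by
  simp only [Fin.lt_def, Fin.coe_castAdd]

lemma nn_lt (q r : ℕ) (a b : Fin r) : Fin.natAdd q a < Fin.natAdd q b ↔ a < b := by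
  simp only [Fin.lt_def, Fin.coe_natAdd]; omega

lemma cn_lt (q r : ℕ) (a : Fin q) (b : Fin r) : Fin.castAdd r a < Fin.natAdd q b := by
  simp [Fin.lt_def]; omega

lemma nc_not_lt (q r : ℕ) (a : Fin r) (b : Fin q) : ¬ Fin.natAdd q a < Fin.castAdd r b := by
  simp [Fin.lt_def]; omega

lemma prod_Ioi_split {M : Type*} [CommMonoid M] (q r : ℕ) (f : Fin (q + r) → Fin (q + r) → M) :
    (∏ a, ∏ b ∈ Ioi a, f a b)
      = ((∏ a : Fin q, ∏ b ∈ Ioi a, f (Fin.castAdd r a) (Fin.castAdd r b)) *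
          ∏ a : Fin r, ∏ b ∈ Ioi a, f (Fin.natAdd q a) (Fin.natAdd q b)) *
        ∏ a : Fin q, ∏ b : Fin r, f (Fin.castAdd r a) (Fin.natAdd q b) := by
  simp only [prod_Ioi_ite]
  rw [Fin.prod_univ_add]
  simp only [Fin.prod_univ_add, prod_mul_distrib, cc_lt, nn_lt, cn_lt, nc_not_lt,
    if_true, if_false, prod_const_one, mul_one, one_mul]
  exact mul_right_comm _ _ _


def euv {q r : ℕ} (u : Equiv.Perm (Fin q)) (v : Equiv.Perm (Fin r)) :
    Equiv.Perm (Fin (q + r)) :=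
  finSumFinEquiv.permCongr (Equiv.sumCongr u v)

@[simp] lemma euv_castAdd {q r : ℕ} (u : Equiv.Perm (Fin q)) (v : Equiv.Perm (Fin r)) (a : Fin q) :
    euv u v (Fin.castAdd r a) = Fin.castAdd r (u a) := by
  simp [euv, Equiv.permCongr_apply]

@[simp] lemma euv_natAdd {q r : ℕ} (u : Equiv.Perm (Fin q)) (v : Equiv.Perm (Fin r)) (b : Fin r) :
    euv u v (Fin.natAdd q b) = Fin.natAdd q (v b) := by
  simp [euv, Equiv.permCongr_apply]

variable {F : Type*} [Field F]

/-- one term of the Hall–Littlewood sum -/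
def Term (t : F) {m : ℕ} (l : Fin m → ℕ) (y : Fin m → F) (σ : Equiv.Perm (Fin m)) : F :=
  (∏ a, y (σ a) ^ l a) *
    ∏ a, ∏ b ∈ Ioi a, ((y (σ a) - t * y (σ b)) / (y (σ a) - y (σ b)))

lemma term_eq (t : F) (q r : ℕ) (lam : Fin q → ℕ) (mu : Fin r → ℕ) (y : Fin (q + r) → F)
    (w : Equiv.Perm (Fin (q + r))) (u : Equiv.Perm (Fin q)) (v : Equiv.Perm (Fin r)) :
    ((∏ a, y (w (Fin.castAdd r (u a))) ^ lam a) *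
        ∏ a, ∏ b ∈ Ioi a, ((y (w (Fin.castAdd r (u a))) - t * y (w (Fin.castAdd r (u b)))) /
          (y (w (Fin.castAdd r (u a))) - y (w (Fin.castAdd r (u b)))))) *
      ((∏ a, y (w (Fin.natAdd q (v a))) ^ mu a) *
        ∏ a, ∏ b ∈ Ioi a, ((y (w (Fin.natAdd q (v a))) - t * y (w (Fin.natAdd q (v b)))) /
          (y (w (Fin.natAdd q (v a))) - y (w (Fin.natAdd q (v b)))))) *
      (∏ a : Fin q, ∏ b : Fin r,
        ((y (w (Fin.castAdd r a)) - t * y (w (Fin.natAdd q b))) /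
          (y (w (Fin.castAdd r a)) - y (w (Fin.natAdd q b)))))
      = Term t (Fin.append lam mu) y (w * euv u v) := by
  rw [Term, Fin.prod_univ_add,
    prod_Ioi_split q r (fun a b => ((y ((w * euv u v) a) - t * y ((w * euv u v) b)) /
      (y ((w * euv u v) a) - y ((w * euv u v) b))))]
  simp only [Equiv.Perm.mul_apply, euv_castAdd, euv_natAdd, Fin.append_left, Fin.append_right]
  have hcross : (∏ a : Fin q, ∏ b : Fin r,
      ((y (w (Fin.castAdd r a)) - t * y (w (Fin.natAdd q b))) /
        (y (w (Fin.castAdd r a)) - y (w (Fin.natAdd q b)))))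
      = ∏ a : Fin q, ∏ b : Fin r,
      ((y (w (Fin.castAdd r (u a))) - t * y (w (Fin.natAdd q (v b)))) /
        (y (w (Fin.castAdd r (u a))) - y (w (Fin.natAdd q (v b))))) := by
    rw [← Equiv.prod_comp u (fun a => ∏ b : Fin r,
      ((y (w (Fin.castAdd r a)) - t * y (w (Fin.natAdd q b))) /
        (y (w (Fin.castAdd r a)) - y (w (Fin.natAdd q b)))))]
    refine Finset.prod_congr rfl fun a _ => ?_
    exact (Equiv.prod_comp v fun b =>
      ((y (w (Fin.castAdd r (u a))) - t * y (w (Fin.natAdd q b))) /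
        (y (w (Fin.castAdd r (u a))) - y (w (Fin.natAdd q b))))).symm
  rw [hcross]
  ring


def RR' (t : F) {m : ℕ} (l : Fin m → ℕ) (z : Fin m → F) : F :=
  ∑ u : Equiv.Perm (Fin m), (∏ a, z (u a) ^ l a) *
    ∏ a, ∏ b ∈ Ioi a, ((z (u a) - t * z (u b)) / (z (u a) - z (u b)))

lemma key (t : F) (q r : ℕ) (lam : Fin q → ℕ) (mu : Fin r → ℕ) (y : Fin (q + r) → F) :
    (∑ w : Equiv.Perm (Fin (q + r)),
        RR' t lam (fun a => y (w (Fin.castAdd r a))) *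
          RR' t mu (fun b => y (w (Fin.natAdd q b))) *
          ∏ a : Fin q, ∏ b : Fin r,
            ((y (w (Fin.castAdd r a)) - t * y (w (Fin.natAdd q b))) /
              (y (w (Fin.castAdd r a)) - y (w (Fin.natAdd q b)))))
      = ((q.factorial * r.factorial : ℕ) : F) * RR' t (Fin.append lam mu) y := by
  have h1 : ∀ w : Equiv.Perm (Fin (q + r)),
      RR' t lam (fun a => y (w (Fin.castAdd r a))) *
        RR' t mu (fun b => y (w (Fin.natAdd q b))) *
        (∏ a : Fin q, ∏ b : Fin r,
          ((y (w (Fin.castAdd r a)) - t * y (w (Fin.natAdd q b))) /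
            (y (w (Fin.castAdd r a)) - y (w (Fin.natAdd q b)))))
      = ∑ u : Equiv.Perm (Fin q), ∑ v : Equiv.Perm (Fin r),
          Term t (Fin.append lam mu) y (w * euv u v) := by
    intro w
    rw [RR', RR', sum_mul_sum, sum_mul]
    refine Finset.sum_congr rfl fun u _ => ?_
    rw [sum_mul]
    exact Finset.sum_congr rfl fun v _ => term_eq t q r lam mu y w u v
  calc (∑ w : Equiv.Perm (Fin (q + r)),
        RR' t lam (fun a => y (w (Fin.castAdd r a))) *
          RR' t mu (fun b => y (w (Fin.natAdd q b))) *
          ∏ a : Fin q, ∏ b : Fin r,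
            ((y (w (Fin.castAdd r a)) - t * y (w (Fin.natAdd q b))) /
              (y (w (Fin.castAdd r a)) - y (w (Fin.natAdd q b)))))
      = ∑ w : Equiv.Perm (Fin (q + r)), ∑ u : Equiv.Perm (Fin q), ∑ v : Equiv.Perm (Fin r),
          Term t (Fin.append lam mu) y (w * euv u v) :=
        Finset.sum_congr rfl fun w _ => h1 w
    _ = ∑ u : Equiv.Perm (Fin q), ∑ v : Equiv.Perm (Fin r), ∑ w : Equiv.Perm (Fin (q + r)),
          Term t (Fin.append lam mu) y (w * euv u v) := by
        rw [Finset.sum_comm]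
        exact Finset.sum_congr rfl fun u _ => Finset.sum_comm
    _ = ∑ u : Equiv.Perm (Fin q), ∑ v : Equiv.Perm (Fin r), ∑ σ : Equiv.Perm (Fin (q + r)),
          Term t (Fin.append lam mu) y σ := by
        refine Finset.sum_congr rfl fun u _ => Finset.sum_congr rfl fun v _ => ?_
        exact Fintype.sum_equiv (Equiv.mulRight (euv u v)) _ _ (fun w => rfl)
    _ = ((q.factorial * r.factorial : ℕ) : F) * RR' t (Fin.append lam mu) y := by
        rw [RR']
        simp only [Finset.sum_const, Finset.card_univ, Fintype.card_perm, Fintype.card_fin,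
          nsmul_eq_mul, Nat.cast_mul]
        simp only [Term]
        ring

end RJux

open RJux in
/-- Proposition 1 of the paper, via symmetrizing operators: for sequences
`λ = (λ₁,…,λ_q)` and `μ = (μ₁,…,μ_r)` of nonnegative integers, with
`R_λ(z₁,…,z_m;t) = ∑_{w∈S_m} w(z₁^{λ₁}⋯z_m^{λ_m} ∏_{i<j}(zᵢ-tzⱼ)/(zᵢ-zⱼ))`,
`∑_{w ∈ Sₙ/(S_q×S_r)} w(R_λ(y₁,…,y_q;t) R_μ(y_{q+1},…,yₙ;t) ∏_{i≤q<j}(yᵢ-tyⱼ)/(yᵢ-yⱼ))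
= R_{λμ}(y₁,…,yₙ;t)` where `n = q + r` and `λμ` is the juxtaposition (the coset sum
being written as the full `Sₙ`-sum divided by `q! r!`). -/
theorem R_juxtaposition (q r : ℕ) (lam : Fin q → ℕ) (mu : Fin r → ℕ) :
    let P := MvPolynomial (Option (Fin (q + r))) ℚ
    let F := FractionRing P
    let y : Fin (q + r) → F := fun i => algebraMap P F (MvPolynomial.X (some i))
    let t : F := algebraMap P F (MvPolynomial.X none)
    let RR : ∀ {m : ℕ}, (Fin m → ℕ) → (Fin m → F) → F := fun {m} l z =>
      ∑ u : Equiv.Perm (Fin m), (∏ a, z (u a) ^ l a) *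
        ∏ a, ∏ b ∈ Ioi a, ((z (u a) - t * z (u b)) / (z (u a) - z (u b)))
    ((q.factorial * r.factorial : ℕ) : F)⁻¹ *
      (∑ w : Equiv.Perm (Fin (q + r)),
        RR lam (fun a => y (w (Fin.castAdd r a))) *
          RR mu (fun b => y (w (Fin.natAdd q b))) *
          ∏ a : Fin q, ∏ b : Fin r,
            ((y (w (Fin.castAdd r a)) - t * y (w (Fin.natAdd q b))) /
              (y (w (Fin.castAdd r a)) - y (w (Fin.natAdd q b)))))
      = RR (Fin.append lam mu) y := by
  intro P F y t RR
  haveI : CharZero F := charZero_of_injective_algebraMap (IsFractionRing.injective P F)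
  have hc : ((q.factorial * r.factorial : ℕ) : F) ≠ 0 :=
    Nat.cast_ne_zero.mpr (by positivity)
  show ((q.factorial * r.factorial : ℕ) : F)⁻¹ *
      (∑ w : Equiv.Perm (Fin (q + r)),
        RR' t lam (fun a => y (w (Fin.castAdd r a))) *
          RR' t mu (fun b => y (w (Fin.natAdd q b))) *
          ∏ a : Fin q, ∏ b : Fin r,
            ((y (w (Fin.castAdd r a)) - t * y (w (Fin.natAdd q b))) /
              (y (w (Fin.castAdd r a)) - y (w (Fin.natAdd q b)))))
      = RR' t (Fin.append lam mu) y
  rw [key, inv_mul_cancel_left₀ hc]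
end
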